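/- A k-basis of the free dialgebra D(X) on a set X is given by the set of elements x_{−m} ≻ (x_{−m+1} ≻ ⋯ ≻ (x_0 ≺ (x_1 ≻ ⋯ ≻ (x_{n−1} ≻ x_n)⋯))) for all m, n ≥ 0 and x_i ∈ X; equivalently (using a≺(b≺c) = a≺(b≻c)) this coincides with Loday's basis {x_{−m} ≻ ⋯ ≻ x_{−1} ≻ x_0 ≺ x_1 ≺ ⋯ ≺ x_n : m, n ≥ 0, x_i ∈ X}. -/

import Mathlib

/-- Ω-words for Ω = {≺, ≻}: `p u v` denotes u ≺ v and `s u v` denotes u ≻ v. -/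
inductive LW (X : Type) : Type
  | var : X → LW X
  | p : LW X → LW X → LW X
  | s : LW X → LW X → LW X
deriving DecidableEq

namespace LW

variable {X : Type}

/-- number of occurrences of variables, |u|_X -/
def szX : LW X → ℕ
  | var _ => 1
  | p u v => szX u + szX v
  | s u v => szX u + szX v

/-- The weight-lexicographic ordering on Ω-words: wt(x) = (1,x),
wt(δᵢ(u₁,u₂)) = (|u|_X, δᵢ, u₁, u₂) with ≻ < ≺, compared lexicographically. -/
inductive LLt [LinearOrder X] : LW X → LW X → Prop
  | size {u v : LW X} : szX u < szX v → LLt u v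
  | var {x y : X} : x < y → LLt (var x) (var y)
  | sp {u1 u2 v1 v2 : LW X} : szX (s u1 u2) = szX (p v1 v2) → LLt (s u1 u2) (p v1 v2)
  | s1 {u1 u2 v1 v2 : LW X} : szX (s u1 u2) = szX (s v1 v2) → LLt u1 v1 →
      LLt (s u1 u2) (s v1 v2)
  | s2 {u1 u2 v2 : LW X} : szX (s u1 u2) = szX (s u1 v2) → LLt u2 v2 →
      LLt (s u1 u2) (s u1 v2)
  | p1 {u1 u2 v1 v2 : LW X} : szX (p u1 u2) = szX (p v1 v2) → LLt u1 v1 →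
      LLt (p u1 u2) (p v1 v2)
  | p2 {u1 u2 v2 : LW X} : szX (p u1 u2) = szX (p u1 v2) → LLt u2 v2 →
      LLt (p u1 u2) (p u1 v2)

/-- Normal words: x ∈ X is normal; v ≻ w is normal if v, w are; v ≺ w is normal
if v, w are normal and v is not of the form v₁ ≻ v₂. -/
inductive Normal : LW X → Prop
  | var {x : X} : Normal (var x)
  | suc {u v : LW X} : Normal u → Normal v → Normal (s u v)
  | pre {u v : LW X} : Normal u → Normal v → (∀ a b, u ≠ s a b) → Normal (p u v)

end LW

/-- A ⋆-Ω-word for Ω = {≺,≻}. -/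
inductive LCtx (X : Type) : Type
  | hole : LCtx X
  | pL : LCtx X → LW X → LCtx X
  | pR : LW X → LCtx X → LCtx X
  | sL : LCtx X → LW X → LCtx X
  | sR : LW X → LCtx X → LCtx X

/-- Substitution of an Ω-word for ⋆ in a ⋆-Ω-word. -/
def LCtx.subst {X : Type} : LCtx X → LW X → LW X
  | .hole, u => u
  | .pL c w, u => .p (c.subst u) w
  | .pR w c, u => .p w (c.subst u)
  | .sL c w, u => .s (c.subst u) w
  | .sR w c, u => .s w (c.subst u)
namespace LW

variable {X : Type}

/-- The product [u ≺ v] for normal u, v. -/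
def nfP : LW X → LW X → LW X
  | .var x, v => .p (.var x) v
  | .p a b, v => .p (.p a b) v
  | .s a b, v => .s a (nfP b v)

/-- The normal form of an Ω-word modulo (x≻y)≺z = x≻(y≺z). -/
def nf : LW X → LW X
  | .var x => .var x
  | .p u v => nfP (nf u) (nf v)
  | .s u v => .s (nf u) (nf v)

theorem normal_nfP {u v : LW X} (hu : Normal u) (hv : Normal v) : Normal (nfP u v) := by
  induction u with
  | var x => exact Normal.pre hu hv (fun a b h => by cases h)
  | p a b iha ihb => exact Normal.pre hu hv (fun a b h => by cases h)
  | s a b iha ihb =>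
      cases hu with
      | suc ha hb => exact Normal.suc ha (ihb hb)

theorem normal_nf : ∀ u : LW X, Normal (nf u)
  | .var _ => Normal.var
  | .p u v => normal_nfP (normal_nf u) (normal_nf v)
  | .s u v => Normal.suc (normal_nf u) (normal_nf v)

end LW

/-- The set N of normal words. -/
abbrev NW (X : Type) := {w : LW X // LW.Normal w}

/-- Normal form as a map into N. -/
def nfN {X : Type} (w : LW X) : NW X := ⟨LW.nf w, LW.normal_nf w⟩
section LFree

variable {X k : Type} [Field k] [LinearOrder X]

/-- The free L-algebra L(X) realized as the k-space with basis the normal words. -/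
abbrev LFree (X k : Type) [Field k] := NW X →₀ k

/-- The s-word u|_s in L(X): substitute into the ⋆-Ω-word c and take normal
forms, extended linearly. -/
noncomputable def lapp (c : LCtx X) (f : LFree X k) : LFree X k :=
  Finsupp.mapDomain (fun w => nfN (c.subst w.1)) f

/-- `NIsLw f w`: w is the leading normal word of f ∈ L(X). -/
def NIsLw (f : LFree X k) (w : NW X) : Prop :=
  w ∈ f.support ∧ ∀ v ∈ f.support, v ≠ w → LW.LLt v.1 w.1

/-- f is monic. -/
def NMonic (f : LFree X k) : Prop := ∃ w, NIsLw f w ∧ f w = 1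

/-- The ideal of L(X) generated by S. -/
noncomputable def NIdS (S : Set (LFree X k)) : Submodule k (LFree X k) :=
  Submodule.span k {g | ∃ (c : LCtx X) (s : LFree X k), s ∈ S ∧ g = lapp c s}

/-- h is a linear combination Σ αᵢ uᵢ|_{sᵢ} of normal sᵢ-words with sᵢ ∈ S and
uᵢ|_{s̄ᵢ} < w. -/
def NTrivLt (S : Set (LFree X k)) (w : NW X) (h : LFree X k) : Prop :=
  ∃ (n : ℕ) (α : Fin n → k) (c : Fin n → LCtx X) (s : Fin n → LFree X k),
    (∀ i, s i ∈ S) ∧ h = ∑ i, α i • lapp (c i) (s i) ∧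
    ∀ i, ∃ ws, NIsLw (s i) ws ∧ LW.Normal ((c i).subst ws.1) ∧
      LW.LLt ((c i).subst ws.1) w.1

/-- h is a linear combination Σ αᵢ uᵢ|_{sᵢ} of normal sᵢ-words with sᵢ ∈ S and
uᵢ|_{s̄ᵢ} ≤ w. -/
def NTrivLe (S : Set (LFree X k)) (w : NW X) (h : LFree X k) : Prop :=
  ∃ (n : ℕ) (α : Fin n → k) (c : Fin n → LCtx X) (s : Fin n → LFree X k),
    (∀ i, s i ∈ S) ∧ h = ∑ i, α i • lapp (c i) (s i) ∧
    ∀ i, ∃ ws, NIsLw (s i) ws ∧ LW.Normal ((c i).subst ws.1) ∧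
      ((c i).subst ws.1 = w.1 ∨ LW.LLt ((c i).subst ws.1) w.1)

/-- All compositions of right multiplication in S are trivial mod S: whenever the
leading word of f ∈ S has the form u₁ ≻ u₂ and v is a normal word, f ≺ v is a
combination of normal s-words with leading words ≤ the leading word of f ≺ v. -/
def RightMultTrivial (S : Set (LFree X k)) : Prop :=
  ∀ f ∈ S, ∀ wf, NIsLw f wf → (∃ u1 u2, wf.1 = .s u1 u2) →
    ∀ v : NW X, ∀ wfv, NIsLw (lapp (.pL .hole v.1) f) wfv →
      NTrivLe S wfv (lapp (.pL .hole v.1) f)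

/-- All compositions of inclusion in S are trivial: whenever w = f̄ = u|_{ḡ} with
u|_g a normal g-word, (f,g)_w = f − u|_g is trivial mod (S, w). -/
def InclusionTrivial (S : Set (LFree X k)) : Prop :=
  ∀ f ∈ S, ∀ g ∈ S, ∀ (c : LCtx X) (wf wg : NW X),
    NIsLw f wf → NIsLw g wg → LW.Normal (c.subst wg.1) → wf.1 = c.subst wg.1 →
      NTrivLt S wf (f - lapp c g)

/-- S is a Gröbner–Shirshov basis in L(X). -/
def NIsGSB (S : Set (LFree X k)) : Prop := RightMultTrivial S ∧ InclusionTrivial S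

end LFree
section Dialg

variable {X k : Type} [Field k]

/-- The product u ≺ v in the free L-algebra on normal words. -/
def mpre (u v : NW X) : NW X := nfN (.p u.1 v.1)

/-- The product u ≻ v in the free L-algebra on normal words. -/
def msuc (u v : NW X) : NW X := ⟨.s u.1 v.1, LW.Normal.suc u.2 v.2⟩

/-- Basis element of L(X) corresponding to a normal word. -/
noncomputable def eN (k : Type) [Field k] {X : Type} (w : NW X) : LFree X k :=
  Finsupp.single w (1 : k)

/-- The relations of the free dialgebra D(X) = L(X | S): the four families
a≺(b≺c) − a≺(b≻c), (a≺b)≻c − a≻(b≻c), (a≺b)≺c − a≺(b≻c), (a≻b)≻c − a≻(b≻c)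
for normal words a, b, c. -/
def DiRel (X k : Type) [Field k] : Set (LFree X k) :=
  {f | ∃ a b c : NW X, f = eN k (mpre a (mpre b c)) - eN k (mpre a (msuc b c))} ∪
  {f | ∃ a b c : NW X, f = eN k (msuc (mpre a b) c) - eN k (msuc a (msuc b c))} ∪
  {f | ∃ a b c : NW X, f = eN k (mpre (mpre a b) c) - eN k (mpre a (msuc b c))} ∪
  {f | ∃ a b c : NW X, f = eN k (msuc (msuc a b) c) - eN k (msuc a (msuc b c))}

/-- The family F₅: a₁≺(a₂≻(⋯≻(a_{n+2}≺a_{n+3})⋯)) − a₁≺(a₂≻(⋯≻(a_{n+2}≻a_{n+3})⋯))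
for n ≥ 1; the list l = [a₂, …, a_{n+1}] has length n ≥ 1. -/
def DiRel5 (X k : Type) [Field k] : Set (LFree X k) :=
  {f | ∃ (a1 : NW X) (l : List (NW X)) (b c : NW X), l ≠ [] ∧
    f = eN k (mpre a1 (l.foldr msuc (mpre b c))) - eN k (mpre a1 (l.foldr msuc (msuc b c)))}

end Dialg
section FreeDialg

variable {X k : Type} [Field k]

/-- The free dialgebra D(X) = L(X)/Id(DiRel). -/
abbrev FreeDi (X k : Type) [Field k] := LFree X k ⧸ NIdS (DiRel X k)

def varN {X : Type} (x : X) : NW X := ⟨.var x, LW.Normal.var⟩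

/-- a₁ ≻ (a₂ ≻ ⋯ ≻ a_n), right-nested. -/
def rcomb {X : Type} : NW X → List (NW X) → NW X
  | a, [] => a
  | a, b :: t => msuc a (rcomb b t)

/-- x₀ ≺ (x₁ ≻ ⋯ ≻ (x_{n−1} ≻ x_n)⋯); just x₀ when n = 0. -/
def dcore {X : Type} (x0 : X) : List X → NW X
  | [] => varN x0
  | y :: t => mpre (varN x0) (rcomb (varN y) (t.map varN))

/-- x_{−m} ≻ (x_{−m+1} ≻ ⋯ ≻ (x₀ ≺ (x₁ ≻ ⋯ ≻ (x_{n−1} ≻ x_n)⋯))). -/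
def dword {X : Type} (lm : List X) (x0 : X) (ln : List X) : NW X :=
  lm.foldr (fun x w => msuc (varN x) w) (dcore x0 ln)

/-- Loday's word x_{−m} ≻ ⋯ ≻ x_{−1} ≻ x₀ ≺ x₁ ≺ ⋯ ≺ x_n (≺ nested on the left). -/
def lodayWord {X : Type} (lm : List X) (x0 : X) (ln : List X) : NW X :=
  lm.foldr (fun x w => msuc (varN x) w)
    (ln.foldl (fun w y => mpre w (varN y)) (varN x0))

/-- The image of a normal word in D(X). -/
noncomputable def dmk (X k : Type) [Field k] (w : NW X) : FreeDi X k :=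
  Submodule.Quotient.mk (eN k w)

end FreeDialg
namespace DialgAux

open LW

variable {X : Type}

theorem nfP_of_not_s {u : LW X} (h : ∀ a b, u ≠ .s a b) (v : LW X) :
    nfP u v = .p u v := by
  cases u with
  | var x => rfl
  | p a b => rfl
  | s a b => exact absurd rfl (h a b)

theorem nf_fix {w : LW X} (h : Normal w) : nf w = w := by
  induction h with
  | var => rfl
  | suc hu hv ihu ihv => simp [nf, ihu, ihv]
  | pre hu hv hns ihu ihv => simp [nf, ihu, ihv, nfP_of_not_s hns]

/-- The list of variables of a word, in order. -/
def vars : LW X → List X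
  | .var x => [x]
  | .p u v => vars u ++ vars v
  | .s u v => vars u ++ vars v

/-- Dialgebra normal form data: (left vars, center, right vars). -/
def DF : LW X → List X × X × List X
  | .var x => ([], x, [])
  | .p u v => ((DF u).1, (DF u).2.1, (DF u).2.2 ++ vars v)
  | .s u v => (vars u ++ (DF v).1, (DF v).2.1, (DF v).2.2)

theorem vars_nfP (u v : LW X) : vars (nfP u v) = vars u ++ vars v := by
  induction u with
  | var x => rfl
  | p a b iha ihb => rfl
  | s a b iha ihb => simp [nfP, vars, ihb, List.append_assoc]

theorem DF_nfP (u v : LW X) : DF (nfP u v) = DF (.p u v) := by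
  induction u with
  | var x => rfl
  | p a b iha ihb => rfl
  | s a b iha ihb => simp [nfP, DF, vars, ihb]

theorem vars_nf (w : LW X) : vars (nf w) = vars w := by
  induction w with
  | var x => rfl
  | p u v ihu ihv => simp [nf, vars_nfP, vars, ihu, ihv]
  | s u v ihu ihv => simp [nf, vars, ihu, ihv]

theorem DF_nf (w : LW X) : DF (nf w) = DF w := by
  induction w with
  | var x => rfl
  | p u v ihu ihv => simp [nf, DF_nfP, DF, ihu, ihv, vars_nf]
  | s u v ihu ihv => simp [nf, DF, ihu, ihv, vars_nf]

theorem vars_DF (u : LW X) : vars u = (DF u).1 ++ (DF u).2.1 :: (DF u).2.2 := by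
  induction u with
  | var x => rfl
  | p u v ihu ihv => simp [vars, DF, ihu, List.append_assoc]
  | s u v ihu ihv => simp [vars, DF, ihv, List.append_assoc]

theorem DF_vars_eq {u v : LW X} (h : DF u = DF v) : vars u = vars v := by
  rw [vars_DF, vars_DF, h]

theorem DF_subst {u v : LW X} (h : DF u = DF v) :
    ∀ c : LCtx X, DF (c.subst u) = DF (c.subst v)
  | .hole => h
  | .pL c w => by simp [LCtx.subst, DF, DF_subst h c]
  | .pR w c => by simp [LCtx.subst, DF, DF_vars_eq (DF_subst h c)]
  | .sL c w => by simp [LCtx.subst, DF, DF_vars_eq (DF_subst h c)]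
  | .sR w c => by simp [LCtx.subst, DF, DF_subst h c]

/-- Composition of contexts. -/
def comp : LCtx X → LCtx X → LCtx X
  | .hole, c' => c'
  | .pL c w, c' => .pL (comp c c') w
  | .pR w c, c' => .pR w (comp c c')
  | .sL c w, c' => .sL (comp c c') w
  | .sR w c, c' => .sR w (comp c c')

theorem subst_comp (c c' : LCtx X) (u : LW X) :
    (comp c c').subst u = c.subst (c'.subst u) := by
  induction c with
  | hole => rfl
  | pL c w ih => simp [comp, LCtx.subst, ih]
  | pR w c ih => simp [comp, LCtx.subst, ih]
  | sL c w ih => simp [comp, LCtx.subst, ih]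
  | sR w c ih => simp [comp, LCtx.subst, ih]

theorem nf_subst_nf (c : LCtx X) (u : LW X) :
    nf (c.subst (nf u)) = nf (c.subst u) := by
  induction c with
  | hole => exact nf_fix (normal_nf u)
  | pL c w ih => simp [LCtx.subst, nf, ih]
  | pR w c ih => simp [LCtx.subst, nf, ih]
  | sL c w ih => simp [LCtx.subst, nf, ih]
  | sR w c ih => simp [LCtx.subst, nf, ih]

theorem mpre_val (u v : NW X) : (mpre u v).1 = nfP u.1 v.1 := by
  show nf (.p u.1 v.1) = _
  simp [nf, nf_fix u.2, nf_fix v.2]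

theorem nfN_s (u v : NW X) : nfN (.s u.1 v.1) = msuc u v :=
  Subtype.ext (by show nf _ = _; simp [nf, nf_fix u.2, nf_fix v.2]; rfl)

/-- fold with ≻ of variables over a normal word. -/
def sfold (l : List X) (w : NW X) : NW X := l.foldr (fun x w => msuc (varN x) w) w

theorem dword_eq (lm : List X) (x0 : X) (ln : List X) :
    dword lm x0 ln = sfold lm (dcore x0 ln) := rfl

theorem sfold_append (l1 l2 : List X) (w : NW X) :
    sfold (l1 ++ l2) w = sfold l1 (sfold l2 w) := by
  simp [sfold, List.foldr_append]

/-- right-nested chain of variables. -/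
def cOL : X → List X → NW X
  | x, [] => varN x
  | x, y :: t => msuc (varN x) (cOL y t)

theorem vars_cOL (x : X) (t : List X) : vars (cOL x t).1 = x :: t := by
  induction t generalizing x with
  | nil => rfl
  | cons y t ih => show vars (.s (.var x) (cOL y t).1) = _; simp [vars, ih]

theorem cOL_rcomb (x : X) (t : List X) :
    cOL x t = rcomb (varN x) (t.map varN) := by
  induction t generalizing x with
  | nil => rfl
  | cons y t ih => simp [cOL, rcomb, ih, List.map]

theorem sfold_cOL (l : List X) (y : X) (s : List X) :
    ∀ (x : X) (t : List X), x :: t = l ++ y :: s → sfold l (cOL y s) = cOL x t := by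
  induction l with
  | nil =>
      intro x t h
      obtain ⟨rfl, rfl⟩ : x = y ∧ t = s := by simpa using h
      rfl
  | cons a l ih =>
      intro x t h
      obtain ⟨rfl, rfl⟩ : x = a ∧ t = l ++ y :: s := by simpa using h
      cases hl : l ++ y :: s with
      | nil => exact absurd hl (by simp)
      | cons x2 t2 =>
          show msuc (varN x) (sfold l (cOL y s)) = cOL x (x2 :: t2)
          rw [ih x2 t2 hl.symm]
          rfl

theorem mpre_sfold (l : List X) (w z : NW X) :
    mpre (sfold l w) z = sfold l (mpre w z) := by
  induction l with
  | nil => rfl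
  | cons x l ih =>
      refine Subtype.ext ?_
      show (mpre (msuc (varN x) (sfold l w)) z).1 = (msuc (varN x) (sfold l (mpre w z))).1
      rw [mpre_val, ← ih]
      show LW.s (.var x) (nfP (sfold l w).1 z.1) = .s (.var x) (mpre (sfold l w) z).1
      rw [mpre_val]

theorem DF_sfold (l : List X) (w : NW X) :
    DF (sfold l w).1 = (l ++ (DF w.1).1, (DF w.1).2.1, (DF w.1).2.2) := by
  induction l with
  | nil => simp [sfold]
  | cons x l ih =>
      show DF (.s (.var x) (sfold l w).1) = _
      simp [DF, vars, ih]

theorem DF_dcore (x0 : X) (ln : List X) : DF (dcore x0 ln).1 = ([], x0, ln) := by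
  cases ln with
  | nil => rfl
  | cons y t =>
      show DF (mpre (varN x0) (rcomb (varN y) (t.map varN))).1 = _
      rw [mpre_val]
      show DF (.p (.var x0) (rcomb (varN y) (t.map varN)).1) = _
      rw [← cOL_rcomb]
      simp [DF, vars, vars_cOL]

theorem DF_dword (lm : List X) (x0 : X) (ln : List X) :
    DF (dword lm x0 ln).1 = (lm, x0, ln) := by
  rw [dword_eq, DF_sfold, DF_dcore]; simp

theorem vars_dword (lm : List X) (x0 : X) (ln : List X) :
    vars (dword lm x0 ln).1 = lm ++ x0 :: ln := by
  rw [vars_DF, DF_dword]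

theorem vars_cons (u : LW X) : ∃ x t, vars u = x :: t := by
  induction u with
  | var x => exact ⟨x, [], rfl⟩
  | p u v ihu ihv => obtain ⟨x, t, h⟩ := ihu; exact ⟨x, t ++ vars v, by simp [vars, h]⟩
  | s u v ihu ihv => obtain ⟨x, t, h⟩ := ihu; exact ⟨x, t ++ vars v, by simp [vars, h]⟩

theorem DF_foldl (ln : List X) (w : NW X) :
    DF ((ln.foldl (fun w y => mpre w (varN y)) w)).1
      = ((DF w.1).1, (DF w.1).2.1, (DF w.1).2.2 ++ ln) := by
  induction ln generalizing w with
  | nil => simp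
  | cons y ln ih =>
      show DF ((ln.foldl _ (mpre w (varN y)))).1 = _
      rw [ih]
      have : DF (mpre w (varN y)).1 = DF (.p w.1 (varN y).1) := by rw [mpre_val, DF_nfP]
      rw [this]
      simp [DF, vars, varN]

theorem DF_loday (lm : List X) (x0 : X) (ln : List X) :
    DF (lodayWord lm x0 ln).1 = (lm, x0, ln) := by
  show DF (sfold lm (ln.foldl (fun w y => mpre w (varN y)) (varN x0))).1 = _
  rw [DF_sfold, DF_foldl]
  simp [DF, varN]

section WithK

variable {k : Type} [Field k]

/-- Congruence modulo the dialgebra ideal. -/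
def Rel (k : Type) [Field k] {X : Type} (u v : NW X) : Prop :=
  eN k u - eN k v ∈ NIdS (DiRel X k)

theorem lapp_eq_lmap (c : LCtx X) (f : LFree X k) :
    lapp c f = Finsupp.lmapDomain k k (fun w : NW X => nfN (c.subst w.1)) f := by
  rw [Finsupp.lmapDomain_apply]; rfl

theorem lapp_sub (c : LCtx X) (f g : LFree X k) :
    lapp c (f - g) = lapp c f - lapp c g := by
  rw [lapp_eq_lmap, lapp_eq_lmap, lapp_eq_lmap, map_sub]

theorem lapp_eN (c : LCtx X) (w : NW X) :
    lapp c (eN k w) = eN k (nfN (c.subst w.1)) := Finsupp.mapDomain_single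

theorem lapp_lapp (c c' : LCtx X) (f : LFree X k) :
    lapp c (lapp c' f) = lapp (comp c c') f := by
  rw [lapp, lapp, lapp, ← Finsupp.mapDomain_comp]
  congr 1
  funext w
  refine Subtype.ext ?_
  show nf (c.subst (nf (c'.subst w.1))) = nf ((comp c c').subst w.1)
  rw [subst_comp]
  exact nf_subst_nf c (c'.subst w.1)

theorem lapp_mem {S : Set (LFree X k)} {f : LFree X k} (hf : f ∈ NIdS S) (c : LCtx X) :
    lapp c f ∈ NIdS S := by
  refine Submodule.span_induction ?_ ?_ ?_ ?_ hf
  · rintro g ⟨c', s, hs, rfl⟩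
    rw [lapp_lapp]
    exact Submodule.subset_span ⟨comp c c', s, hs, rfl⟩
  · show lapp c 0 ∈ _
    rw [lapp, Finsupp.mapDomain_zero]
    exact Submodule.zero_mem _
  · intro x y _ _ hx hy
    rw [lapp, Finsupp.mapDomain_add]
    exact Submodule.add_mem _ hx hy
  · intro r x _ hx
    rw [lapp, Finsupp.mapDomain_smul]
    exact Submodule.smul_mem _ r hx

theorem rel_refl (u : NW X) : Rel k u u := by
  rw [Rel, sub_self]; exact Submodule.zero_mem _

theorem rel_symm {u v : NW X} (h : Rel k u v) : Rel k v u := by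
  have := Submodule.neg_mem _ h
  rwa [neg_sub] at this

theorem rel_trans {u v w : NW X} (h1 : Rel k u v) (h2 : Rel k v w) : Rel k u w := by
  have := Submodule.add_mem _ h1 h2
  rwa [sub_add_sub_cancel] at this

theorem rel_ctx {u v : NW X} (h : Rel k u v) (c : LCtx X) :
    Rel k (nfN (c.subst u.1)) (nfN (c.subst v.1)) := by
  have := lapp_mem h c
  rwa [lapp_sub, lapp_eN, lapp_eN] at this

theorem diRel_mem {f : LFree X k} (hf : f ∈ DiRel X k) : f ∈ NIdS (DiRel X k) := by
  have h1 : f = lapp .hole f := by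
    rw [lapp]
    have h2 : (fun w : NW X => nfN ((LCtx.hole).subst w.1)) = id := by
      funext w; exact Subtype.ext (nf_fix w.2)
    rw [h2, Finsupp.mapDomain_id]
  rw [h1]
  exact Submodule.subset_span ⟨.hole, f, hf, rfl⟩

theorem g1 (a b c : NW X) : Rel k (mpre a (mpre b c)) (mpre a (msuc b c)) := by
  apply diRel_mem
  simp only [DiRel, Set.mem_union, Set.mem_setOf_eq]
  exact Or.inl (Or.inl (Or.inl ⟨a, b, c, rfl⟩))

theorem g2 (a b c : NW X) : Rel k (msuc (mpre a b) c) (msuc a (msuc b c)) := by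
  apply diRel_mem
  simp only [DiRel, Set.mem_union, Set.mem_setOf_eq]
  exact Or.inl (Or.inl (Or.inr ⟨a, b, c, rfl⟩))

theorem g3 (a b c : NW X) : Rel k (mpre (mpre a b) c) (mpre a (msuc b c)) := by
  apply diRel_mem
  simp only [DiRel, Set.mem_union, Set.mem_setOf_eq]
  exact Or.inl (Or.inr ⟨a, b, c, rfl⟩)

theorem g4 (a b c : NW X) : Rel k (msuc (msuc a b) c) (msuc a (msuc b c)) := by
  apply diRel_mem
  simp only [DiRel, Set.mem_union, Set.mem_setOf_eq]
  exact Or.inr ⟨a, b, c, rfl⟩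

theorem c_preL {u u' : NW X} (h : Rel k u u') (v : NW X) :
    Rel k (mpre u v) (mpre u' v) :=
  rel_ctx h (.pL .hole v.1)

theorem c_preR (u : NW X) {v v' : NW X} (h : Rel k v v') :
    Rel k (mpre u v) (mpre u v') :=
  rel_ctx h (.pR u.1 .hole)

theorem c_sucL {u u' : NW X} (h : Rel k u u') (v : NW X) :
    Rel k (msuc u v) (msuc u' v) := by
  have := rel_ctx h (.sL .hole v.1)
  simpa only [LCtx.subst, nfN_s] using this

theorem c_sucR (u : NW X) {v v' : NW X} (h : Rel k v v') :
    Rel k (msuc u v) (msuc u v') := by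
  have := rel_ctx h (.sR u.1 .hole)
  simpa only [LCtx.subst, nfN_s] using this

theorem sfold_congr (l : List X) {w w' : NW X} (h : Rel k w w') :
    Rel k (sfold l w) (sfold l w') := by
  induction l with
  | nil => exact h
  | cons x l ih => exact c_sucR (varN x) ih

theorem relH' : ∀ (w : LW X) (hw : Normal w) (v : NW X),
    Rel k (msuc ⟨w, hw⟩ v) (sfold (vars w) v)
  | .var x, _, v => rel_refl _
  | .p u1 u2, hw, v => by
      cases hw with
      | pre hu1 hu2 hns =>
        have e : mpre ⟨u1, hu1⟩ ⟨u2, hu2⟩ = ⟨LW.p u1 u2, Normal.pre hu1 hu2 hns⟩ :=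
          Subtype.ext (by rw [mpre_val]; exact nfP_of_not_s hns u2)
        have s1 : Rel k (msuc ⟨LW.p u1 u2, Normal.pre hu1 hu2 hns⟩ v)
            (msuc ⟨u1, hu1⟩ (msuc ⟨u2, hu2⟩ v)) := by
          have h2 := g2 (k := k) ⟨u1, hu1⟩ ⟨u2, hu2⟩ v
          rwa [e] at h2
        refine rel_trans s1 (rel_trans (relH' u1 hu1 (msuc ⟨u2, hu2⟩ v)) ?_)
        have h3 := sfold_congr (k := k) (vars u1) (relH' u2 hu2 v)
        show Rel k _ (sfold (vars u1 ++ vars u2) v)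
        rw [sfold_append]
        exact h3
  | .s u1 u2, hw, v => by
      cases hw with
      | suc hu1 hu2 =>
        have s1 : Rel k (msuc ⟨LW.s u1 u2, Normal.suc hu1 hu2⟩ v)
            (msuc ⟨u1, hu1⟩ (msuc ⟨u2, hu2⟩ v)) := g4 ⟨u1, hu1⟩ ⟨u2, hu2⟩ v
        refine rel_trans s1 (rel_trans (relH' u1 hu1 (msuc ⟨u2, hu2⟩ v)) ?_)
        have h3 := sfold_congr (k := k) (vars u1) (relH' u2 hu2 v)
        show Rel k _ (sfold (vars u1 ++ vars u2) v)
        rw [sfold_append]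
        exact h3

theorem relH (u v : NW X) : Rel k (msuc u v) (sfold (vars u.1) v) :=
  relH' u.1 u.2 v

theorem relF2 {v v' : NW X} (hF : ∀ w : NW X, Rel k (mpre w v) (mpre w v')) :
    ∀ (l : List X) (w : NW X), Rel k (mpre w (sfold l v)) (mpre w (sfold l v'))
  | [], w => hF w
  | x :: l, w => by
      have h1 := g3 (k := k) w (varN x) (sfold l v)
      have h2 := g3 (k := k) w (varN x) (sfold l v')
      have h3 := relF2 hF l (mpre w (varN x))
      exact rel_trans (rel_symm h1) (rel_trans h3 h2)

theorem relF : ∀ (vw : LW X) (hv : Normal vw) (w : NW X) (x : X) (t : List X),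
    vars vw = x :: t → Rel k (mpre w ⟨vw, hv⟩) (mpre w (cOL x t))
  | .var y, hv, w, x, t, h => by
      have h' : y :: ([] : List X) = x :: t := h
      injection h' with h1 h2
      subst h1; subst h2
      exact rel_refl _
  | .p v1 v2, hv, w, x, t, h => by
      cases hv with
      | pre h1 h2 hns =>
        have e : mpre ⟨v1, h1⟩ ⟨v2, h2⟩ = ⟨LW.p v1 v2, Normal.pre h1 h2 hns⟩ :=
          Subtype.ext (by rw [mpre_val]; exact nfP_of_not_s hns v2)
        have s1 : Rel k (mpre w ⟨LW.p v1 v2, Normal.pre h1 h2 hns⟩)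
            (mpre w (msuc ⟨v1, h1⟩ ⟨v2, h2⟩)) := by
          have := g1 (k := k) w ⟨v1, h1⟩ ⟨v2, h2⟩
          rwa [e] at this
        have s2 : Rel k (mpre w (msuc ⟨v1, h1⟩ ⟨v2, h2⟩))
            (mpre w (sfold (vars v1) ⟨v2, h2⟩)) :=
          c_preR w (relH' v1 h1 ⟨v2, h2⟩)
        obtain ⟨x2, t2, h2v⟩ := vars_cons v2
        have s3 := relF2 (fun w' => relF v2 h2 w' x2 t2 h2v) (vars v1) w
        have s4 : sfold (vars v1) (cOL x2 t2) = cOL x t :=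
          sfold_cOL (vars v1) x2 t2 x t (by rw [← h, ← h2v]; rfl)
        rw [s4] at s3
        exact rel_trans s1 (rel_trans s2 s3)
  | .s v1 v2, hv, w, x, t, h => by
      cases hv with
      | suc h1 h2 =>
        have s2 : Rel k (mpre w ⟨LW.s v1 v2, Normal.suc h1 h2⟩)
            (mpre w (sfold (vars v1) ⟨v2, h2⟩)) :=
          c_preR w (relH' v1 h1 ⟨v2, h2⟩)
        obtain ⟨x2, t2, h2v⟩ := vars_cons v2
        have s3 := relF2 (fun w' => relF v2 h2 w' x2 t2 h2v) (vars v1) w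
        have s4 : sfold (vars v1) (cOL x2 t2) = cOL x t :=
          sfold_cOL (vars v1) x2 t2 x t (by rw [← h, ← h2v]; rfl)
        rw [s4] at s3
        exact rel_trans s2 s3

theorem relKP0 (lm : List X) (c0 : X) (ln : List X) (x : X) (t : List X) :
    Rel k (mpre (dword lm c0 ln) (cOL x t)) (dword lm c0 (ln ++ x :: t)) := by
  rw [dword_eq, dword_eq, mpre_sfold]
  apply sfold_congr
  cases ln with
  | nil =>
      have e : dcore c0 (x :: t) = mpre (varN c0) (cOL x t) := by
        rw [dcore, cOL_rcomb]
      rw [List.nil_append, e]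
      exact rel_refl _
  | cons y sl =>
      have e1 : dcore c0 (y :: sl) = mpre (varN c0) (cOL y sl) := by
        rw [dcore, cOL_rcomb]
      rw [e1]
      have s1 := g3 (k := k) (varN c0) (cOL y sl) (cOL x t)
      have s2 : Rel k (mpre (varN c0) (msuc (cOL y sl) (cOL x t)))
          (mpre (varN c0) (sfold (y :: sl) (cOL x t))) := by
        have := c_preR (k := k) (varN c0) (relH (cOL y sl) (cOL x t))
        rwa [vars_cOL] at this
      have s4 : sfold (y :: sl) (cOL x t) = cOL y (sl ++ x :: t) :=
        sfold_cOL (y :: sl) x t y (sl ++ x :: t) rfl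
      rw [s4] at s2
      have e2 : dcore c0 ((y :: sl) ++ x :: t) = mpre (varN c0) (cOL y (sl ++ x :: t)) := by
        rw [List.cons_append, dcore, cOL_rcomb]
      rw [e2]
      exact rel_trans s1 s2

theorem relMain : ∀ (w : LW X) (hw : Normal w),
    Rel k ⟨w, hw⟩ (dword (DF w).1 (DF w).2.1 (DF w).2.2)
  | .var x, _ => rel_refl _
  | .s u v, hw => by
      cases hw with
      | suc hu hv =>
        have s1 : Rel k (msuc ⟨u, hu⟩ ⟨v, hv⟩)
            (msuc ⟨u, hu⟩ (dword (DF v).1 (DF v).2.1 (DF v).2.2)) :=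
          c_sucR _ (relMain v hv)
        have s2 := relH (k := k) ⟨u, hu⟩ (dword (DF v).1 (DF v).2.1 (DF v).2.2)
        have e : sfold (vars u) (dword (DF v).1 (DF v).2.1 (DF v).2.2)
            = dword (vars u ++ (DF v).1) (DF v).2.1 (DF v).2.2 := by
          rw [dword_eq, dword_eq, sfold_append]
        rw [e] at s2
        exact rel_trans s1 s2
  | .p u v, hw => by
      cases hw with
      | pre hu hv hns =>
        have e : mpre ⟨u, hu⟩ ⟨v, hv⟩ = ⟨LW.p u v, Normal.pre hu hv hns⟩ :=
          Subtype.ext (by rw [mpre_val]; exact nfP_of_not_s hns v)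
        have s1 : Rel k (⟨LW.p u v, Normal.pre hu hv hns⟩ : NW X)
            (mpre (dword (DF u).1 (DF u).2.1 (DF u).2.2) ⟨v, hv⟩) := by
          have := c_preL (relMain u hu) ⟨v, hv⟩
          rwa [e] at this
        obtain ⟨x, t, hx⟩ := vars_cons v
        have s2 := relF (k := k) v hv (dword (DF u).1 (DF u).2.1 (DF u).2.2) x t hx
        have s3 := relKP0 (k := k) (DF u).1 (DF u).2.1 (DF u).2.2 x t
        show Rel k _ (dword (DF u).1 (DF u).2.1 ((DF u).2.2 ++ vars v))
        rw [hx]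
        exact rel_trans s1 (rel_trans s2 s3)

theorem DF_fam1 (a b c : NW X) : DF (mpre a (mpre b c)).1 = DF (mpre a (msuc b c)).1 := by
  rw [mpre_val, mpre_val, mpre_val, DF_nfP, DF_nfP]
  show DF (.p a.1 (nfP b.1 c.1)) = DF (.p a.1 (.s b.1 c.1))
  simp [DF, vars_nfP, vars]

theorem DF_fam2 (a b c : NW X) : DF (msuc (mpre a b) c).1 = DF (msuc a (msuc b c)).1 := by
  show DF (.s (mpre a b).1 c.1) = DF (.s a.1 (.s b.1 c.1))
  rw [mpre_val]
  simp [DF, vars, vars_nfP, List.append_assoc]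

theorem DF_fam3 (a b c : NW X) : DF (mpre (mpre a b) c).1 = DF (mpre a (msuc b c)).1 := by
  rw [mpre_val, mpre_val, mpre_val, DF_nfP, DF_nfP]
  show DF (.p (nfP a.1 b.1) c.1) = DF (.p a.1 (.s b.1 c.1))
  rw [show DF (.p (nfP a.1 b.1) c.1)
      = ((DF (nfP a.1 b.1)).1, (DF (nfP a.1 b.1)).2.1, (DF (nfP a.1 b.1)).2.2 ++ vars c.1) from rfl,
    DF_nfP]
  simp [DF, vars, List.append_assoc]

theorem DF_fam4 (a b c : NW X) : DF (msuc (msuc a b) c).1 = DF (msuc a (msuc b c)).1 := by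
  show DF (.s (.s a.1 b.1) c.1) = DF (.s a.1 (.s b.1 c.1))
  simp [DF, vars, List.append_assoc]

theorem hker : NIdS (DiRel X k) ≤
    LinearMap.ker (Finsupp.lmapDomain k k (fun w : NW X => DF w.1)) := by
  rw [NIdS, Submodule.span_le]
  rintro g ⟨c, s, hs, rfl⟩
  simp only [SetLike.mem_coe, LinearMap.mem_ker]
  obtain ⟨w1, w2, hDF, rfl⟩ : ∃ w1 w2 : NW X, DF w1.1 = DF w2.1 ∧ s = eN k w1 - eN k w2 := by
    simp only [DiRel, Set.mem_union, Set.mem_setOf_eq] at hs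
    rcases hs with ((⟨a, b, c', rfl⟩ | ⟨a, b, c', rfl⟩) | ⟨a, b, c', rfl⟩) | ⟨a, b, c', rfl⟩
    · exact ⟨_, _, DF_fam1 a b c', rfl⟩
    · exact ⟨_, _, DF_fam2 a b c', rfl⟩
    · exact ⟨_, _, DF_fam3 a b c', rfl⟩
    · exact ⟨_, _, DF_fam4 a b c', rfl⟩
  rw [lapp_sub, lapp_eN, lapp_eN, map_sub]
  have hsingle : ∀ w : NW X,
      Finsupp.lmapDomain k k (fun w : NW X => DF w.1) (eN k w) = Finsupp.single (DF w.1) 1 :=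
    fun w => by rw [Finsupp.lmapDomain_apply]; exact Finsupp.mapDomain_single
  rw [hsingle, hsingle]
  have : DF (nfN (c.subst w1.1)).1 = DF (nfN (c.subst w2.1)).1 := by
    show DF (nf (c.subst w1.1)) = DF (nf (c.subst w2.1))
    rw [DF_nf, DF_nf]
    exact DF_subst hDF c
  rw [this, sub_self]

end WithK

end DialgAux

/-- the elements x_{−m} ≻ (⋯ ≻ (x₀ ≺ (x₁ ≻ ⋯ ≻ x_n))) for m, n ≥ 0
and xᵢ ∈ X form a k-basis of the free dialgebra D(X); moreover this family
coincides in D(X) with Loday's basis {x_{−m} ≻ ⋯ ≻ x₀ ≺ x₁ ≺ ⋯ ≺ x_n}. -/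
theorem free_dialgebra_basis (X k : Type) [Field k] :
    LinearIndependent k
      (fun q : List X × X × List X => dmk X k (dword q.1 q.2.1 q.2.2)) ∧
    Submodule.span k (Set.range
      (fun q : List X × X × List X => dmk X k (dword q.1 q.2.1 q.2.2))) = ⊤ ∧
    ∀ (lm : List X) (x0 : X) (ln : List X),
      dmk X k (dword lm x0 ln) = dmk X k (lodayWord lm x0 ln) := by
  classical
  refine ⟨?_, ?_, ?_⟩
  · -- linear independence
    set φ := Finsupp.lmapDomain k k (fun w : NW X => DialgAux.DF w.1) with hφ
    set φbar := Submodule.liftQ (NIdS (DiRel X k)) φ DialgAux.hker with hφbar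
    apply LinearIndependent.of_comp φbar
    have hcomp : (⇑φbar ∘ fun q : List X × X × List X => dmk X k (dword q.1 q.2.1 q.2.2))
        = fun q : List X × X × List X => Finsupp.single q (1 : k) := by
      funext q
      show φbar (Submodule.Quotient.mk (eN k (dword q.1 q.2.1 q.2.2))) = _
      rw [hφbar, Submodule.liftQ_apply, hφ, Finsupp.lmapDomain_apply]
      rw [show (eN k (dword q.1 q.2.1 q.2.2)) = Finsupp.single (dword q.1 q.2.1 q.2.2) (1:k) from rfl]
      rw [Finsupp.mapDomain_single, DialgAux.DF_dword]
    rw [hcomp]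
    have := (Finsupp.basisSingleOne (R := k) (ι := List X × X × List X)).linearIndependent
    rwa [Finsupp.coe_basisSingleOne] at this
  · -- spanning
    rw [eq_top_iff]
    rintro z -
    obtain ⟨f, rfl⟩ := Submodule.Quotient.mk_surjective _ z
    induction f using Finsupp.induction with
    | zero =>
        rw [show (Submodule.Quotient.mk 0 : FreeDi X k) = 0 from rfl]
        exact Submodule.zero_mem _
    | single_add a b f _ _ ih =>
        rw [Submodule.Quotient.mk_add]
        refine Submodule.add_mem _ ?_ ih
        have e1 : (Submodule.Quotient.mk (Finsupp.single a b) : FreeDi X k) = b • dmk X k a := by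
          rw [dmk, ← Submodule.Quotient.mk_smul]
          congr 1
          rw [eN, Finsupp.smul_single, smul_eq_mul, mul_one]
        rw [e1]
        refine Submodule.smul_mem _ _ ?_
        have hrel := DialgAux.relMain (k := k) a.1 a.2
        have e2 : dmk X k a
            = dmk X k (dword (DialgAux.DF a.1).1 (DialgAux.DF a.1).2.1 (DialgAux.DF a.1).2.2) :=
          (Submodule.Quotient.eq _).2 hrel
        rw [e2]
        exact Submodule.subset_span
          ⟨((DialgAux.DF a.1).1, (DialgAux.DF a.1).2.1, (DialgAux.DF a.1).2.2), rfl⟩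
  · -- Loday's basis
    intro lm x0 ln
    have h1 := DialgAux.relMain (k := k) (lodayWord lm x0 ln).1 (lodayWord lm x0 ln).2
    rw [DialgAux.DF_loday] at h1
    exact ((Submodule.Quotient.eq _).2 h1).symm
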